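/- arXiv:2407.19745 — 2 statements merged into one kernel-verified Lean document; each statement's English description precedes it below -/
import Mathlib

section
/- For n > 2, any automorphism f of A(n,k,k) that maps each set Δ_{ij} to itself (for all i ∈ [n], j ∈ [k]) is the identity. Equivalently, the kernel of the natural homomorphism from Aut(A(n,k,k)) to its induced action on the family Ω = {Δ_{ij} : i ∈ [n], j ∈ [k]} is trivial. -/
def A (n k r : ℕ) : SimpleGraph (Fin k ↪ Fin n) where
  Adj s t := s ≠ t ∧ (Finset.univ.filter fun i => s i ≠ t i).card = r
  symm := by
    constructor
    rintro s t ⟨hst, hc⟩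
    refine ⟨hst.symm, ?_⟩
    have h : (Finset.univ.filter fun i => t i ≠ s i)
        = (Finset.univ.filter fun i => s i ≠ t i) := by
      ext i
      simp only [Finset.mem_filter, Finset.mem_univ, true_and]
      exact ne_comm
    rw [h]; exact hc
  loopless := by constructor; rintro s ⟨h, _⟩; exact h rfl

def Delta (n k : ℕ) (i : Fin n) (j : Fin k) : Set (Fin k ↪ Fin n) :=
  {s | s j = i ∧ ∀ t, t ≠ j → s t ≠ i}

/-- For `n > 2`, any automorphism of `A(n,k,k)` fixing every `Δ_{ij}` setwise is the
identity: the kernel of the action of `Aut(A(n,k,k))` on `Ω = {Δ_{ij}}` is trivial. -/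
theorem stmt7 (n k : ℕ) (hn : 2 < n) (hk : 1 ≤ k) (hkn : k ≤ n)
    (f : A n k k ≃g A n k k)
    (hf : ∀ (i : Fin n) (j : Fin k), ⇑f '' Delta n k i j = Delta n k i j) :
    f = 1 := by
  have h : ∀ s : Fin k ↪ Fin n, f s = s := by
    intro s
    have hkey : ∀ j : Fin k, (f s) j = s j := by
      intro j
      have hs : s ∈ Delta n k (s j) j :=
        ⟨rfl, fun t ht he => ht (s.injective he)⟩
      have hfs : f s ∈ Delta n k (s j) j := by
        rw [← hf (s j) j]; exact ⟨s, hs, rfl⟩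
      exact hfs.1
    exact Function.Embedding.ext hkey
  exact RelIso.ext h
end

section
/- For 1 < k < n, the partition Σ = {Ω_1,...,Ω_n} where Ω_i = {Δ_{i1},...,Δ_{ik}}, is a system of blocks for the action of Aut(A(n,k,k)) on the set Ω of all sets Δ_{ij}: for every automorphism g and every i, either Ω_i^g = Ω_i or Ω_i^g ∩ Ω_i = ∅. -/
section Basic

variable {n k : ℕ}

lemma adj_iff (hk : 0 < k) {s t : Fin k ↪ Fin n} :
    (A n k k).Adj s t ↔ ∀ p, s p ≠ t p := by
  constructor
  · rintro ⟨hne, hc⟩ p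
    have : (Finset.univ.filter fun i => s i ≠ t i) = Finset.univ := by
      apply Finset.eq_univ_of_card
      simpa using hc
    have hp : p ∈ Finset.univ.filter fun i => s i ≠ t i := by rw [this]; exact Finset.mem_univ p
    simpa using hp
  · intro h
    refine ⟨?_, ?_⟩
    · intro he
      exact h ⟨0, hk⟩ (by rw [he])
    · have : (Finset.univ.filter fun i => s i ≠ t i) = Finset.univ :=
        Finset.filter_true_of_mem (fun p _ => h p)
      simp [this]

lemma not_adj_of_agree (hk : 0 < k) {s t : Fin k ↪ Fin n} {p : Fin k} (h : s p = t p) :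
    ¬ (A n k k).Adj s t := by
  rw [adj_iff hk]
  push_neg
  exact ⟨p, h⟩

lemma agree_of_not_adj (hk : 0 < k) {s t : Fin k ↪ Fin n} (hne : s ≠ t)
    (h : ¬ (A n k k).Adj s t) : ∃ p, s p = t p := by
  rw [adj_iff hk] at h
  push_neg at h
  exact h

lemma mem_Delta {i : Fin n} {j : Fin k} {s : Fin k ↪ Fin n} :
    s ∈ Delta n k i j ↔ s j = i := by
  constructor
  · exact fun h => h.1
  · intro h
    exact ⟨h, fun t ht hc => ht (s.injective (hc.trans h.symm))⟩

lemma exists_fresh (hkn : k < n) (u : Fin k ↪ Fin n) : ∃ c, ∀ q, u q ≠ c := by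
  by_contra h
  push_neg at h
  have hsurj : Function.Surjective u := fun c => h c
  have := Fintype.card_le_of_surjective u hsurj
  simp at this
  omega

end Basic

section Hall
variable {n k : ℕ}

lemma exists_emb (hkn : k < n) {j1 p : Fin k} (hjp : j1 ≠ p) {i a : Fin n}
    (hia : i ≠ a) (w : Fin k → Fin n) :
    ∃ t : Fin k ↪ Fin n, t j1 = i ∧ t p = a ∧ ∀ q, q ≠ j1 → q ≠ p → t q ≠ w q := by
  classical
  set T : Fin k → Finset (Fin n) := fun q =>
    if q = j1 then {i} else if q = p then {a} else (Finset.univ \ {i, a, w q}) with hT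
  have hpj : p ≠ j1 := fun h => hjp h.symm
  set φ : Fin k → Fin n := fun q => if q = j1 then i else a with hφ
  have hφinj : ∀ x ∈ ({j1, p} : Finset (Fin k)), ∀ y ∈ ({j1, p} : Finset (Fin k)),
      φ x = φ y → x = y := by
    intro x hx y hy hxy
    rw [Finset.mem_insert, Finset.mem_singleton] at hx hy
    rcases hx with rfl | rfl <;> rcases hy with rfl | rfl
    · rfl
    · rw [hφ] at hxy; simp [hpj] at hxy; exact absurd hxy hia
    · rw [hφ] at hxy; simp [hpj] at hxy; exact absurd hxy.symm hia
    · rfl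
  have hφmem : ∀ q ∈ ({j1, p} : Finset (Fin k)), ∀ S : Finset (Fin k), q ∈ S →
      φ q ∈ S.biUnion T := by
    intro q hq S hqS
    rw [Finset.mem_insert, Finset.mem_singleton] at hq
    rcases hq with rfl | rfl
    · exact Finset.mem_biUnion.2 ⟨q, hqS, by simp [hT, hφ]⟩
    · exact Finset.mem_biUnion.2 ⟨q, hqS, by simp [hT, hφ, hpj]⟩
  have hall : ∀ S : Finset (Fin k), S.card ≤ (S.biUnion T).card := by
    intro S
    by_cases hfree : (S \ {j1, p}).Nonempty
    · obtain ⟨q0, hq0⟩ := hfree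
      rw [Finset.mem_sdiff, Finset.mem_insert, Finset.mem_singleton] at hq0
      push_neg at hq0
      obtain ⟨hq0S, hq0j1, hq0p⟩ := hq0
      have hsub : (T q0) ∪ ((S ∩ {j1, p}).image φ) ⊆ S.biUnion T := by
        intro x hx
        rw [Finset.mem_union] at hx
        rcases hx with hx | hx
        · exact Finset.mem_biUnion.2 ⟨q0, hq0S, hx⟩
        · rw [Finset.mem_image] at hx
          obtain ⟨q, hq, rfl⟩ := hx
          rw [Finset.mem_inter] at hq
          exact hφmem q hq.2 S hq.1
      have hdisj : Disjoint (T q0) ((S ∩ {j1, p}).image φ) := by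
        rw [Finset.disjoint_left]
        intro x hx hx2
        rw [Finset.mem_image] at hx2
        obtain ⟨q, hq, rfl⟩ := hx2
        have hxT : φ q ∈ Finset.univ \ ({i, a, w q0} : Finset (Fin n)) := by
          rw [hT] at hx
          simpa [if_neg hq0j1, if_neg hq0p] using hx
        simp only [Finset.mem_sdiff, Finset.mem_univ, true_and, Finset.mem_insert,
          Finset.mem_singleton] at hxT
        push_neg at hxT
        by_cases hqj : q = j1
        · exact hxT.1 (by simp [hφ, hqj])
        · exact hxT.2.1 (by simp [hφ, hqj])
      have h3 : ({i, a, w q0} : Finset (Fin n)).card ≤ 3 := by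
        refine le_trans (Finset.card_insert_le _ _) ?_
        refine le_trans (Nat.add_le_add_right (Finset.card_insert_le _ _) 1) ?_
        simp
      have hcs : (Finset.univ \ ({i, a, w q0} : Finset (Fin n))).card
          = n - ({i, a, w q0} : Finset (Fin n)).card := by
        rw [Finset.card_sdiff_of_subset (Finset.subset_univ _)]; simp
      have hc1 : n - 3 ≤ (T q0).card := by
        rw [hT]
        simp only [if_neg hq0j1, if_neg hq0p]
        rw [hcs]
        omega
      have hc2 : ((S ∩ {j1, p}).image φ).card = (S ∩ {j1, p}).card := by
        apply Finset.card_image_of_injOn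
        intro x hx y hy hxy
        rw [Finset.mem_coe, Finset.mem_inter] at hx hy
        exact hφinj x hx.2 y hy.2 hxy
      have hcard : S.card ≤ (S \ {j1, p}).card + (S ∩ {j1, p}).card := by
        rw [Finset.card_sdiff_add_card_inter]
      have hfreecard : (S \ {j1, p}).card ≤ k - 2 := by
        have hsub2 : S \ {j1, p} ⊆ Finset.univ \ {j1, p} :=
          Finset.sdiff_subset_sdiff (Finset.subset_univ S) (le_refl _)
        have h2 : (Finset.univ \ ({j1, p} : Finset (Fin k))).card = k - 2 := by
          rw [Finset.card_sdiff_of_subset (Finset.subset_univ _)]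
          rw [Finset.card_insert_of_notMem (by simpa using hjp), Finset.card_singleton]
          simp
        calc (S \ {j1, p}).card ≤ _ := Finset.card_le_card hsub2
          _ = k - 2 := h2
      have hc := Finset.card_le_card hsub
      rw [Finset.card_union_of_disjoint hdisj, hc2] at hc
      omega
    · rw [Finset.not_nonempty_iff_eq_empty, Finset.sdiff_eq_empty_iff_subset] at hfree
      have himg : S.card = (S.image φ).card := by
        symm
        apply Finset.card_image_of_injOn
        intro x hx y hy hxy
        rw [Finset.mem_coe] at hx hy
        exact hφinj x (hfree hx) y (hfree hy) hxy
      rw [himg]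
      apply Finset.card_le_card
      intro x hx
      rw [Finset.mem_image] at hx
      obtain ⟨q, hq, rfl⟩ := hx
      exact hφmem q (hfree hq) S hq
  obtain ⟨f, hfinj, hf⟩ := (Finset.all_card_le_biUnion_card_iff_exists_injective T).1 hall
  refine ⟨⟨f, hfinj⟩, ?_, ?_, ?_⟩
  · have := hf j1; simpa [hT] using this
  · have := hf p
    simpa [hT, hpj] using this
  · intro q hq1 hq2
    have := hf q
    rw [hT] at this
    simp only [if_neg hq1, if_neg hq2, Finset.mem_sdiff, Finset.mem_univ, true_and,
      Finset.mem_insert, Finset.mem_singleton] at this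
    push_neg at this
    exact this.2.2

end Hall

section Shift
variable {n k : ℕ} [NeZero k]

def shmap (m : Fin k) (u : Fin k ↪ Fin n) : Fin k ↪ Fin n :=
  (Equiv.addRight m).toEmbedding.trans u

@[simp] lemma shmap_apply (m : Fin k) (u : Fin k ↪ Fin n) (p : Fin k) :
    shmap m u p = u (p + m) := rfl

lemma shmap_shmap (a b : Fin k) (u : Fin k ↪ Fin n) :
    shmap a (shmap b u) = shmap (a + b) u := by
  ext p
  simp [add_assoc]

@[simp] lemma shmap_zero (u : Fin k ↪ Fin n) : shmap 0 u = u := by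
  ext p; simp

omit [NeZero k] in
def updEmb (u : Fin k ↪ Fin n) (p : Fin k) (c : Fin n) (hc : ∀ q, u q ≠ c) :
    Fin k ↪ Fin n :=
  ⟨Function.update u p c, by
    intro a b hab
    rw [Function.update_apply, Function.update_apply] at hab
    split_ifs at hab with h1 h2 h2
    · exact h1.trans h2.symm
    · exact absurd hab.symm (hc b)
    · exact absurd hab (hc a)
    · exact u.injective hab⟩

omit [NeZero k] in
lemma updEmb_apply (u : Fin k ↪ Fin n) (p : Fin k) (c : Fin n) (hc : ∀ q, u q ≠ c)
    (q : Fin k) : updEmb u p c hc q = if q = p then c else u q := by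
  show Function.update (⇑u) p c q = _
  rw [Function.update_apply]

end Shift

section PhiSec
variable {n k : ℕ}

def NN (n k : ℕ) (s : Fin k ↪ Fin n) (S : Set (Fin k ↪ Fin n)) : Set (Fin k ↪ Fin n) :=
  {t | t ∈ S ∧ ¬ (A n k k).Adj s t}

def Phi (n k : ℕ) (S : Set (Fin k ↪ Fin n)) : Set (Fin k ↪ Fin n) :=
  S ∪ {s | s ∉ S ∧ ∃ s', s' ∉ S ∧ NN n k s S ⊂ NN n k s' S}

def Usets (n k : ℕ) (i : Fin n) : Set (Fin k ↪ Fin n) := {s | ∃ m, s m = i}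

lemma Phi_Delta (hk : 1 < k) (hkn : k < n) (i : Fin n) (j1 : Fin k) :
    Phi n k (Delta n k i j1) = Usets n k i := by
  have hk0 : 0 < k := by omega
  apply Set.Subset.antisymm
  · rintro x (hx | ⟨hxD, s', hs'D, hss⟩)
    · exact ⟨j1, (mem_Delta.1 hx)⟩
    · by_contra hxU
      simp only [Usets, Set.mem_setOf_eq] at hxU
      push_neg at hxU
      -- Step 1 : s' agrees with x off j1
      have hstep : ∀ p, p ≠ j1 → s' p = x p := by
        intro p hp
        obtain ⟨t, ht1, ht2, ht3⟩ := exists_emb hkn (fun h => hp h.symm)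
          (fun h => hxU p h.symm) s'
        have htD : t ∈ Delta n k i j1 := mem_Delta.2 ht1
        have htNNx : t ∈ NN n k x (Delta n k i j1) :=
          ⟨htD, not_adj_of_agree hk0 (p := p) ht2.symm⟩
        have htNNs' : t ∈ NN n k s' (Delta n k i j1) := hss.1 htNNx
        have hts' : s' ≠ t := by
          intro h
          exact hs'D (h ▸ htD)
        obtain ⟨q, hq⟩ := agree_of_not_adj hk0 hts' htNNs'.2
        by_cases hqj : q = j1
        · exfalso; exact hs'D (mem_Delta.2 (by rw [hqj] at hq; rw [hq, ht1]))
        · by_cases hqp : q = p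
          · rw [hqp] at hq; rw [hq, ht2]
          · exact absurd hq.symm (ht3 q hqj hqp)
      -- Step 2 : reverse inclusion, contradiction with strictness
      apply hss.2
      intro r hr
      have hrs' : s' ≠ r := fun h => hs'D (h ▸ hr.1)
      obtain ⟨q, hq⟩ := agree_of_not_adj hk0 hrs' hr.2
      have hqj : q ≠ j1 := by
        intro h
        subst h
        exact hs'D (mem_Delta.2 (hq.trans (mem_Delta.1 hr.1)))
      refine ⟨hr.1, not_adj_of_agree hk0 (p := q) ?_⟩
      rw [← hq, hstep q hqj]
  · intro x hx
    obtain ⟨m, hm⟩ := hx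
    by_cases hxD : x ∈ Delta n k i j1
    · exact Or.inl hxD
    · have hmj : m ≠ j1 := by
        intro h
        exact hxD (mem_Delta.2 (h ▸ hm))
      obtain ⟨c, hc⟩ := exists_fresh hkn x
      have hic : i ≠ c := hm ▸ hc m
      refine Or.inr ⟨hxD, updEmb x m c hc, ?_, ?_, ?_⟩
      · intro h
        have := mem_Delta.1 h
        rw [updEmb_apply] at this
        rw [if_neg (fun hh : j1 = m => hmj hh.symm)] at this
        exact hxD (mem_Delta.2 this)
      · -- NN x Δ ⊆ NN s' Δ
        intro r hr
        have hrx : x ≠ r := fun h => hxD (h ▸ hr.1)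
        obtain ⟨q, hq⟩ := agree_of_not_adj hk0 hrx hr.2
        have hqj : q ≠ j1 := by
          intro h; subst h
          exact hxD (mem_Delta.2 (hq.trans (mem_Delta.1 hr.1)))
        have hqm : q ≠ m := by
          intro h; subst h
          have : r q = i := hq.symm.trans hm
          exact hqj (r.injective (this.trans (mem_Delta.1 hr.1).symm))
        refine ⟨hr.1, not_adj_of_agree hk0 (p := q) ?_⟩
        rw [updEmb_apply, if_neg hqm, hq]
      · -- strictness
        intro hsup
        obtain ⟨t, ht1, ht2, ht3⟩ := exists_emb hkn (fun h : j1 = m => hmj h.symm) hic x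
        have htD : t ∈ Delta n k i j1 := mem_Delta.2 ht1
        have htNN : t ∈ NN n k (updEmb x m c hc) (Delta n k i j1) := by
          refine ⟨htD, not_adj_of_agree hk0 (p := m) ?_⟩
          rw [updEmb_apply, if_pos rfl, ht2]
        have := (hsup htNN).2
        apply this
        rw [adj_iff hk0]
        intro p
        by_cases hpj : p = j1
        · subst hpj
          rw [ht1]
          exact fun h => hxD (mem_Delta.2 h)
        · by_cases hpm : p = m
          · subst hpm
            rw [ht2, hm]
            exact hic
          · exact fun h => (ht3 p hpj hpm) h.symm

end PhiSec

section EquivSec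
variable {n k : ℕ} (g : A n k k ≃g A n k k)

lemma NN_image (s : Fin k ↪ Fin n) (S : Set (Fin k ↪ Fin n)) :
    NN n k (g s) (⇑g '' S) = ⇑g '' NN n k s S := by
  ext y
  constructor
  · rintro ⟨⟨y₀, hy₀, rfl⟩, hadj⟩
    exact ⟨y₀, ⟨hy₀, fun h => hadj (g.map_adj_iff.2 h)⟩, rfl⟩
  · rintro ⟨y₀, ⟨hy₀, hadj⟩, rfl⟩
    exact ⟨⟨y₀, hy₀, rfl⟩, fun h => hadj (g.map_adj_iff.1 h)⟩

lemma Phi_image (S : Set (Fin k ↪ Fin n)) :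
    Phi n k (⇑g '' S) = ⇑g '' Phi n k S := by
  have hginj : Function.Injective (⇑g) := g.toEquiv.injective
  have himg : ∀ x : Fin k ↪ Fin n, ∃ x₀, g x₀ = x := fun x => ⟨g.symm x, by simp⟩
  ext y
  constructor
  · rintro (hy | ⟨hy, s', hs', hss⟩)
    · obtain ⟨y₀, h, rfl⟩ := hy; exact ⟨y₀, Or.inl h, rfl⟩
    · obtain ⟨y₀, rfl⟩ := himg y
      obtain ⟨s₀, rfl⟩ := himg s'
      have hy₀ : y₀ ∉ S := fun h => hy ⟨y₀, h, rfl⟩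
      have hs₀ : s₀ ∉ S := fun h => hs' ⟨s₀, h, rfl⟩
      rw [NN_image, NN_image] at hss
      refine ⟨y₀, Or.inr ⟨hy₀, s₀, hs₀, ?_, ?_⟩, rfl⟩
      · exact (Set.image_subset_image_iff hginj).1 hss.1
      · exact fun hsub => hss.2 (Set.image_mono hsub)
  · rintro ⟨y₀, (h | ⟨hy₀, s₀, hs₀, hss⟩), rfl⟩
    · exact Or.inl ⟨y₀, h, rfl⟩
    · refine Or.inr ⟨?_, g s₀, ?_, ?_, ?_⟩
      · rintro ⟨z, hz, hzy⟩; exact hy₀ (hginj hzy ▸ hz)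
      · rintro ⟨z, hz, hzs⟩; exact hs₀ (hginj hzs ▸ hz)
      · rw [NN_image, NN_image]
        exact Set.image_mono hss.1
      · rw [NN_image, NN_image]
        exact fun h => hss.2 ((Set.image_subset_image_iff hginj).1 h)

end EquivSec

section RowSec
variable {n k : ℕ} [NeZero k]

lemma shmap_injective (m : Fin k) : Function.Injective (shmap (n := n) m) := by
  intro u u' h
  refine Function.Embedding.ext fun q => ?_
  have := congrArg (fun f : Fin k ↪ Fin n => f (q - m)) h
  simpa [sub_add_cancel] using this

noncomputable def posv (i : Fin n) (y : Fin k ↪ Fin n) : Fin k :=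
  if h : ∃ m, y m = i then h.choose else 0

lemma posv_spec {i : Fin n} {y : Fin k ↪ Fin n} (h : ∃ m, y m = i) :
    y (posv i y) = i := by
  rw [posv, dif_pos h]
  exact h.choose_spec

lemma posv_eq {i : Fin n} {y : Fin k ↪ Fin n} {m : Fin k} (hm : y m = i) :
    posv i y = m := y.injective ((posv_spec ⟨m, hm⟩).trans hm.symm)

lemma orbit_reps_eq (hk0 : 0 < k) {F : Set (Fin k ↪ Fin n)}
    (hF : ∀ x ∈ F, ∀ y ∈ F, ¬ (A n k k).Adj x y) {u : Fin k ↪ Fin n} {m1 m2 : Fin k}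
    (h1 : shmap m1 u ∈ F) (h2 : shmap m2 u ∈ F) : m1 = m2 := by
  by_cases he : shmap m1 u = shmap m2 u
  · have := congrArg (fun f : Fin k ↪ Fin n => f 0) he
    simp only [shmap_apply] at this
    exact add_left_cancel (u.injective this)
  · obtain ⟨q, hq⟩ := agree_of_not_adj hk0 he (hF _ h1 _ h2)
    simp only [shmap_apply] at hq
    exact add_left_cancel (u.injective hq)

lemma rigid_step (hk0 : 0 < k) {F : Set (Fin k ↪ Fin n)}
    (hF : ∀ x ∈ F, ∀ y ∈ F, ¬ (A n k k).Adj x y) {i : Fin n} {u : Fin k ↪ Fin n}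
    {ju : Fin k} (hu : u ju = i) {c : Fin n} (hc : ∀ q, u q ≠ c) {p : Fin k}
    (hp : p ≠ ju) {m1 m2 : Fin k} (h1 : shmap m1 u ∈ F)
    (h2 : shmap m2 (updEmb u p c hc) ∈ F) : m1 = m2 := by
  set v := updEmb u p c hc with hv
  have hvju : v ju = i := by
    rw [hv, updEmb_apply, if_neg (fun h : ju = p => hp h.symm)]; exact hu
  by_cases he : shmap m1 u = shmap m2 v
  · have h := congrArg (fun f : Fin k ↪ Fin n => f (ju - m1)) he
    simp only [shmap_apply] at h
    have h1' : ju - m1 + m1 = ju := by abel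
    rw [h1'] at h
    -- h : u ju = v (ju - m1 + m2), i.e. i = v (...)
    have hthis : ju - m1 + m2 = ju := v.injective (h.symm.trans (hu.trans hvju.symm))
    have h2' : ju - m1 + m1 = ju := by abel
    have := hthis.trans h2'.symm
    exact (add_left_cancel this).symm
  · obtain ⟨q, hq⟩ := agree_of_not_adj hk0 he (hF _ h1 _ h2)
    simp only [shmap_apply] at hq
    rw [hv, updEmb_apply] at hq
    by_cases hqp : q + m2 = p
    · rw [if_pos hqp] at hq
      exact absurd hq (hc _)
    · rw [if_neg hqp] at hq
      exact add_left_cancel (u.injective hq)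

lemma pos_const (hk0 : 0 < k) (hkn : k < n) {i : Fin n} {F : Set (Fin k ↪ Fin n)}
    (hF : ∀ x ∈ F, ∀ y ∈ F, ¬ (A n k k).Adj x y)
    (hrep : ∀ u : Fin k ↪ Fin n, (∃ m0, u m0 = i) → ∃ m, shmap m u ∈ F) :
    ∀ d (u u' : Fin k ↪ Fin n) (ju : Fin k), u ju = i → u' ju = i →
      (Finset.univ.filter fun p => u p ≠ u' p).card ≤ d →
      ∀ m1 m2, shmap m1 u ∈ F → shmap m2 u' ∈ F → m1 = m2 := by
  intro d
  induction d with
  | zero =>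
    intro u u' ju hu hu' hcard m1 m2 h1 h2
    have : u = u' := by
      refine Function.Embedding.ext fun q => ?_
      by_contra hq
      have : q ∈ Finset.univ.filter fun p => u p ≠ u' p := by simp [hq]
      have := Finset.card_pos.2 ⟨q, this⟩
      omega
    subst this
    exact orbit_reps_eq hk0 hF h1 h2
  | succ d ih =>
    intro u u' ju hu hu' hcard m1 m2 h1 h2
    by_cases hle : (Finset.univ.filter fun p => u p ≠ u' p).card ≤ d
    · exact ih u u' ju hu hu' hle m1 m2 h1 h2
    · have hpos : 0 < (Finset.univ.filter fun p => u p ≠ u' p).card := by omega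
      obtain ⟨p, hpmem⟩ := Finset.card_pos.1 hpos
      have hp : u p ≠ u' p := by simpa using hpmem
      have hpju : p ≠ ju := by
        intro h; subst h; exact hp (hu.trans hu'.symm)
      have herase : ((Finset.univ.filter fun q => u q ≠ u' q).erase p).card ≤ d := by
        rw [Finset.card_erase_of_mem hpmem]; omega
      by_cases hfresh : ∀ q, u q ≠ u' p
      · set v := updEmb u p (u' p) hfresh with hv
        have hvju : v ju = i := by
          rw [hv, updEmb_apply, if_neg (fun h : ju = p => hpju h.symm)]; exact hu
        obtain ⟨m3, h3⟩ := hrep v ⟨ju, hvju⟩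
        have e1 : m1 = m3 := rigid_step hk0 hF hu hfresh hpju h1 h3
        have hbound : (Finset.univ.filter fun q => v q ≠ u' q).card ≤ d := by
          refine le_trans (Finset.card_le_card ?_) herase
          intro x hx
          simp only [Finset.mem_filter, Finset.mem_univ, true_and] at hx
          rw [Finset.mem_erase, Finset.mem_filter]
          have hxp : x ≠ p := by
            intro h; subst h
            exact hx (by rw [hv, updEmb_apply, if_pos rfl])
          refine ⟨hxp, Finset.mem_univ x, ?_⟩
          rw [hv, updEmb_apply, if_neg hxp] at hx
          exact hx
        have e2 : m3 = m2 := ih v u' ju hvju hu' hbound m3 m2 h3 h2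
        exact e1.trans e2
      · push_neg at hfresh
        obtain ⟨q, hq⟩ := hfresh
        have hqp : q ≠ p := by
          intro h; subst h; exact hp hq
        have hqju : q ≠ ju := by
          intro h; subst h
          rw [hu] at hq
          exact hpju (u'.injective (hu'.trans hq)).symm
        obtain ⟨c, hc⟩ := exists_fresh hkn u
        set v := updEmb u q c hc with hv
        have hvju : v ju = i := by
          rw [hv, updEmb_apply, if_neg (fun h : ju = q => hqju h.symm)]; exact hu
        obtain ⟨m3, h3⟩ := hrep v ⟨ju, hvju⟩
        have e1 : m1 = m3 := rigid_step hk0 hF hu hc hqju h1 h3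
        have hfresh2 : ∀ x, v x ≠ u' p := by
          intro x
          rw [hv, updEmb_apply]
          by_cases hxq : x = q
          · rw [if_pos hxq]
            exact fun h => (hc q) (hq.symm ▸ h.symm ▸ rfl)
          · rw [if_neg hxq]
            intro h
            exact hxq (u.injective (h.trans hq.symm))
        set v' := updEmb v p (u' p) hfresh2 with hv'
        have hv'ju : v' ju = i := by
          rw [hv', updEmb_apply, if_neg (fun h : ju = p => hpju h.symm)]; exact hvju
        obtain ⟨m4, h4⟩ := hrep v' ⟨ju, hv'ju⟩
        have e2 : m3 = m4 := rigid_step hk0 hF hvju hfresh2 hpju h3 h4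
        have hbound : (Finset.univ.filter fun x => v' x ≠ u' x).card ≤ d := by
          refine le_trans (Finset.card_le_card ?_) herase
          intro x hx
          simp only [Finset.mem_filter, Finset.mem_univ, true_and] at hx
          rw [Finset.mem_erase, Finset.mem_filter]
          have hxp : x ≠ p := by
            intro h; subst h
            exact hx (by rw [hv', updEmb_apply, if_pos rfl])
          refine ⟨hxp, Finset.mem_univ x, ?_⟩
          by_cases hxq : x = q
          · subst hxq
            intro hcon
            rw [hcon] at hq
            exact hxp (u'.injective hq)
          · rw [hv', updEmb_apply, if_neg hxp, hv, updEmb_apply, if_neg hxq] at hx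
            exact hx
        have e3 : m4 = m2 := ih v' u' ju hv'ju hu' hbound m4 m2 h4 h2
        exact (e1.trans e2).trans e3

end RowSec

section RowSec2
variable {n k : ℕ} [NeZero k]

lemma Delta_nonempty (hk : 1 < k) (hkn : k < n) (i : Fin n) (j : Fin k) :
    ∃ t, t ∈ Delta n k i j := by
  obtain ⟨p, hp⟩ := Fintype.exists_ne_of_one_lt_card (by simpa using hk) j
  obtain ⟨a, ha⟩ := Fintype.exists_ne_of_one_lt_card
    (by simpa using lt_trans hk hkn) i
  obtain ⟨t, ht1, -, -⟩ := exists_emb hkn (fun h => hp h.symm) (fun h => ha h.symm)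
    (fun _ => a)
  exact ⟨t, mem_Delta.2 ht1⟩

lemma Delta_ncard_eq (i : Fin n) (j j' : Fin k) :
    (Delta n k i j).ncard = (Delta n k i j').ncard := by
  have himg : shmap (n := n) (j - j') '' Delta n k i j = Delta n k i j' := by
    ext y
    constructor
    · rintro ⟨x, hx, rfl⟩
      refine mem_Delta.2 ?_
      rw [shmap_apply]
      have h : j' + (j - j') = j := by abel
      rw [h]; exact mem_Delta.1 hx
    · intro hy
      refine ⟨shmap (j' - j) y, ?_, ?_⟩
      · refine mem_Delta.2 ?_
        rw [shmap_apply]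
        have h : j + (j' - j) = j' := by abel
        rw [h]; exact mem_Delta.1 hy
      · rw [shmap_shmap]
        have h : (j - j') + (j' - j) = 0 := by abel
        rw [h, shmap_zero]
  rw [← himg, Set.ncard_image_of_injective _ (shmap_injective _)]

lemma row_image (hk : 1 < k) (hkn : k < n) (g : A n k k ≃g A n k k) (i : Fin n)
    (hU : ⇑g '' Usets n k i = Usets n k i) (j : Fin k) :
    ∃ j', ⇑g '' Delta n k i j = Delta n k i j' := by
  have hk0 : 0 < k := by omega
  set F : Set (Fin k ↪ Fin n) := ⇑g '' Delta n k i j with hF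
  have hginj : Function.Injective (⇑g) := g.toEquiv.injective
  have hFU : F ⊆ Usets n k i := by
    rw [hF, ← hU]
    exact Set.image_mono (fun x hx => ⟨j, mem_Delta.1 hx⟩)
  have hindep : ∀ x ∈ F, ∀ y ∈ F, ¬ (A n k k).Adj x y := by
    rintro x ⟨a, ha, rfl⟩ y ⟨b, hb, rfl⟩ hadj
    have hab := g.map_adj_iff.1 hadj
    exact not_adj_of_agree hk0 ((mem_Delta.1 ha).trans (mem_Delta.1 hb).symm) hab
  classical
  have hrep : ∀ u : Fin k ↪ Fin n, (∃ m0, u m0 = i) → ∃ m, shmap m u ∈ F := by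
    set β : (Fin k ↪ Fin n) → (Fin k ↪ Fin n) :=
      fun x => shmap (posv i (g x) - j) (g x) with hβ
    have hβinv : ∀ x, shmap (j - posv i (g x)) (β x) = g x := by
      intro x
      rw [hβ]
      simp only
      rw [shmap_shmap]
      have h : (j - posv i (g x)) + (posv i (g x) - j) = 0 := by abel
      rw [h, shmap_zero]
    have hβmem : ∀ x ∈ Delta n k i j, β x ∈ Delta n k i j := by
      intro x hx
      have hgU : (g x) ∈ Usets n k i := hFU ⟨x, hx, rfl⟩
      refine mem_Delta.2 ?_
      rw [hβ]
      simp only [shmap_apply]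
      have h : j + (posv i (g x) - j) = posv i (g x) := by abel
      rw [h]
      exact posv_spec hgU
    have hβinj : Set.InjOn β (Delta n k i j) := by
      intro x hx y hy hxy
      have hx' : shmap (j - posv i (g x)) (β x) ∈ F := by
        rw [hβinv x]; exact ⟨x, hx, rfl⟩
      have hy' : shmap (j - posv i (g y)) (β x) ∈ F := by
        rw [hxy, hβinv y]; exact ⟨y, hy, rfl⟩
      have hmm := orbit_reps_eq hk0 hindep hx' hy'
      have : g x = g y := by
        rw [← hβinv x, ← hβinv y, ← hxy, hmm]
      exact hginj this
    have himg2 : β '' Delta n k i j = Delta n k i j := by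
      apply Set.eq_of_subset_of_ncard_le
      · rintro y ⟨x, hx, rfl⟩; exact hβmem x hx
      · rw [Set.ncard_image_of_injOn hβinj]
      · exact Set.toFinite _
    rintro u ⟨m0, hm0⟩
    have hzD : shmap (m0 - j) u ∈ Delta n k i j := by
      refine mem_Delta.2 ?_
      rw [shmap_apply]
      have h : j + (m0 - j) = m0 := by abel
      rw [h]; exact hm0
    have hzi : shmap (m0 - j) u ∈ β '' Delta n k i j := himg2.symm ▸ hzD
    obtain ⟨x, hx, hbx⟩ := hzi
    set px := posv i (g x) with hpx
    refine ⟨m0 - px, ?_⟩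
    have h1 : g x = shmap (j - px) (β x) := (hβinv x).symm
    have hgx : g x = shmap (m0 - px) u := by
      rw [h1, hbx, shmap_shmap]
      congr 1
      abel
    rw [← hgx]
    exact ⟨x, hx, rfl⟩
  obtain ⟨t0, ht0⟩ := Delta_nonempty hk hkn i j
  have hw0 : g t0 ∈ F := ⟨t0, ht0, rfl⟩
  have hw0U := hFU hw0
  refine ⟨posv i (g t0), ?_⟩
  have hsub : F ⊆ Delta n k i (posv i (g t0)) := by
    intro w hw
    have hwU := hFU hw
    have hpw : w (posv i w) = i := posv_spec hwU
    have hpw0 : (g t0) (posv i (g t0)) = i := posv_spec hw0U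
    have h0 : shmap 0 w ∈ F := by rw [shmap_zero]; exact hw
    set u' := shmap (posv i (g t0) - posv i w) (g t0) with hu'
    have hu'p : u' (posv i w) = i := by
      rw [hu', shmap_apply]
      have h : posv i w + (posv i (g t0) - posv i w) = posv i (g t0) := by abel
      rw [h]; exact hpw0
    have h2 : shmap (posv i w - posv i (g t0)) u' ∈ F := by
      rw [hu', shmap_shmap]
      have h : (posv i w - posv i (g t0)) + (posv i (g t0) - posv i w) = 0 := by abel
      rw [h, shmap_zero]; exact hw0
    have hmain := pos_const hk0 hkn hindep hrep
      ((Finset.univ.filter fun p => w p ≠ u' p).card) w u' (posv i w) hpw hu'p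
      (le_refl _) 0 (posv i w - posv i (g t0)) h0 h2
    have heq : posv i w = posv i (g t0) := sub_eq_zero.1 hmain.symm
    refine mem_Delta.2 ?_
    rw [← heq]; exact hpw
  apply Set.eq_of_subset_of_ncard_le hsub
  · rw [hF, Set.ncard_image_of_injective _ hginj]
    exact le_of_eq (Delta_ncard_eq i (posv i (g t0)) j)

end RowSec2

/-- For `1 < k < n`, the sets `Ω_i = {Δ_{i1},…,Δ_{ik}}` form a system of blocks for
the action of `Aut(A(n,k,k))` on `Ω = {Δ_{ij}}`: every automorphism maps each `Ω_i`
either onto itself or onto a set disjoint from it. -/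
theorem stmt8 (n k : ℕ) (hk : 1 < k) (hkn : k < n)
    (g : A n k k ≃g A n k k) (i : Fin n) :
    (Set.image ⇑g) '' {S | ∃ j : Fin k, S = Delta n k i j} =
        {S | ∃ j : Fin k, S = Delta n k i j} ∨
    (Set.image ⇑g) '' {S | ∃ j : Fin k, S = Delta n k i j} ∩
        {S | ∃ j : Fin k, S = Delta n k i j} = ∅ := by
  haveI : NeZero k := ⟨by omega⟩
  by_cases hemp : (Set.image ⇑g) '' {S | ∃ j : Fin k, S = Delta n k i j} ∩
      {S | ∃ j : Fin k, S = Delta n k i j} = ∅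
  · exact Or.inr hemp
  left
  obtain ⟨T, hT1, hT2⟩ := Set.nonempty_iff_ne_empty.2 hemp
  obtain ⟨S0, hS0, hTS⟩ := hT1
  obtain ⟨j0, rfl⟩ := hS0
  obtain ⟨j1, hj1⟩ := hT2
  have hgD : ⇑g '' Delta n k i j0 = Delta n k i j1 := hTS.trans hj1
  have hU : ⇑g '' Usets n k i = Usets n k i := by
    calc ⇑g '' Usets n k i
        = ⇑g '' (Phi n k (Delta n k i j0)) := by rw [Phi_Delta hk hkn]
      _ = Phi n k (⇑g '' Delta n k i j0) := (Phi_image g _).symm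
      _ = Phi n k (Delta n k i j1) := by rw [hgD]
      _ = Usets n k i := Phi_Delta hk hkn i j1
  have hginj : Function.Injective (⇑g) := g.toEquiv.injective
  classical
  choose σ hσ using fun j => row_image hk hkn g i hU j
  apply Set.Subset.antisymm
  · rintro T' ⟨S, ⟨j, rfl⟩, rfl⟩
    exact ⟨σ j, hσ j⟩
  · rintro T' ⟨j', rfl⟩
    have hσinj : Function.Injective σ := by
      intro a b hab
      have himg : ⇑g '' Delta n k i a = ⇑g '' Delta n k i b := by
        rw [hσ a, hσ b, hab]
      have hD : Delta n k i a = Delta n k i b := (Set.image_eq_image hginj).1 himg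
      obtain ⟨t, ht⟩ := Delta_nonempty hk hkn i a
      have ht2 : t ∈ Delta n k i b := hD ▸ ht
      exact t.injective ((mem_Delta.1 ht).trans (mem_Delta.1 ht2).symm)
    obtain ⟨j, hj⟩ := Finite.injective_iff_surjective.1 hσinj j'
    exact ⟨Delta n k i j, ⟨j, rfl⟩, by rw [← hj]; exact hσ j⟩
end
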